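/- Let n ≥ 1. For a ∈ ℂⁿ with √(1−2/e) ≤ |a| < 1, define f_a(z) = h_a(z) − ∫₀¹ ⟨z,a⟩·log(2/(1 − t⟨z,a⟩)) dt, where h_a(z) = (log(2/(1−|a|²)))^{−1}·(⟨z,a⟩ − 1)·[(1 + log(2/(1 − ⟨z,a⟩)))² + 1] and log is the principal branch. Then Rf_a(a) = 0 and R(Rf_a)(a) = |a|⁴/(1 − |a|²), and sup over all such a of the Zygmund norm ‖f_a‖ is finite. -/

import Mathlib

/-!
Put `w = ⟨z, a⟩` and `L = log (2 / (1 - |a|²))`. Then `f_a(z) = Φ(w)` for a function `Φ` of one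
variable: the integral is an explicit antiderivative of `ℓ(w) = log (2 / (1 - w))`, and
`Φ'(w) = ℓ(w) (ℓ(w) / L - 1)`. Since `R(g ∘ ⟨·, a⟩)(z) = w g'(w)`, we get `Rf_a = w Φ'(w)` and
`R(Rf_a) = w (w Φ')'(w)`; at `z = a` we have `w = |a|²` and `ℓ(w) = L`, which gives both identities.

For the bound, `|w| ≤ |a|` gives `|ℓ(w)| ≤ log (2 / (1 - |w|)) + 2 ≤ 4 L` as soon as `L ≥ 1`, which is
exactly the condition `|a|² ≥ 1 - 2/e`; together with `(1 - |w|) |ℓ(w)| ≤ 4` this bounds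
`(1 - |z|²) |R(Rf_a)(z)|` by an absolute constant, while `|f_a(0)| ≤ 5`.
-/

open MeasureTheory Metric Filter

noncomputable section

/-- `E n` is `ℂⁿ` with the Euclidean structure. -/
abbrev E (n : ℕ) := EuclideanSpace ℂ (Fin n)

/-- The open unit ball of `ℂⁿ`. -/
def uball (n : ℕ) : Set (E n) := Metric.ball 0 1

/-- The radial derivative `Rf(z) = ∑ z_j ∂f/∂z_j(z)`. -/
def rad (n : ℕ) (f : E n → ℂ) (z : E n) : ℂ :=
  ∑ j : Fin n, z j * fderiv ℂ f z (EuclideanSpace.single j 1)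

/-- The set of values `(1-|z|²)|R(Rf)(z)|`, `z ∈ B`. -/
def zygSet (n : ℕ) (f : E n → ℂ) : Set ℝ :=
  {x | ∃ z ∈ uball n, x = (1 - ‖z‖ ^ 2) * ‖rad n (rad n f) z‖}

/-- Membership in the Zygmund space: `sup_{z∈B} (1-|z|²)|R(Rf)(z)| < ∞`. -/
def memZ (n : ℕ) (f : E n → ℂ) : Prop := BddAbove (zygSet n f)

/-- The Zygmund norm `‖f‖ = |f(0)| + sup_{z∈B} (1-|z|²)|R(Rf)(z)|`. -/
def zygNorm (n : ℕ) (f : E n → ℂ) : ℝ :=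
  ‖f 0‖ + sSup (zygSet n f)

/-- The extended Cesàro operator `T_g f(z) = ∫₀¹ f(tz) Rg(tz) dt/t`. -/
def Tg (n : ℕ) (g f : E n → ℂ) (z : E n) : ℂ :=
  ∫ t in (0:ℝ)..1, f (t • z) * rad n g (t • z) / (t : ℂ)

/-- The operator `I_g f(z) = ∫₀¹ Rf(tz) g(tz) dt/t`. -/
def Ig (n : ℕ) (g f : E n → ℂ) (z : E n) : ℂ :=
  ∫ t in (0:ℝ)..1, rad n f (t • z) * g (t • z) / (t : ℂ)

/-- The Hermitian pairing `⟨z,w⟩ = ∑ z_j conj(w_j)`. -/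
def hip (n : ℕ) (z w : E n) : ℂ := ∑ j : Fin n, z j * (starRingEnd ℂ) (w j)

/-- The test function
`h_a(z) = (log(2/(1-|a|²)))⁻¹ (⟨z,a⟩-1) [(1+log(2/(1-⟨z,a⟩)))² + 1]`. -/
def ha (n : ℕ) (a : E n) (z : E n) : ℂ :=
  ((Real.log (2 / (1 - ‖a‖ ^ 2)) : ℂ))⁻¹ * (hip n z a - 1) *
    ((1 + Complex.log (2 / (1 - hip n z a))) ^ 2 + 1)

/-- The test function `f_a(z) = h_a(z) - ∫₀¹ ⟨z,a⟩ log(2/(1-t⟨z,a⟩)) dt`. -/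
def fa (n : ℕ) (a : E n) (z : E n) : ℂ :=
  ha n a z - ∫ t in (0:ℝ)..1, hip n z a * Complex.log (2 / (1 - (t : ℂ) * hip n z a))

namespace ZygmundTest

open Topology

def ell (w : ℂ) : ℂ := Real.log 2 - Complex.log (1 - w)

def ellPrim (w : ℂ) : ℂ := w * Real.log 2 + (1 - w) * Complex.log (1 - w) + w

def Φ (L : ℝ) (w : ℂ) : ℂ := (L : ℂ)⁻¹ * (w - 1) * ((1 + ell w) ^ 2 + 1) - ellPrim w

def Φ₁ (L : ℝ) (w : ℂ) : ℂ := (L : ℂ)⁻¹ * ell w ^ 2 - ell w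

def Φ₂ (L : ℝ) (w : ℂ) : ℂ := Φ₁ L w + w * ((2 * (L : ℂ)⁻¹ * ell w - 1) / (1 - w))

section Derivatives

variable {w : ℂ}

lemma re_one_sub_pos (hw : ‖w‖ < 1) : 0 < (1 - w).re := by
  simpa using (Complex.re_le_norm w).trans_lt hw

lemma one_sub_mem_slitPlane (hw : ‖w‖ < 1) : 1 - w ∈ Complex.slitPlane :=
  Complex.mem_slitPlane_iff.2 (Or.inl (re_one_sub_pos hw))

lemma one_sub_ne_zero (hw : ‖w‖ < 1) : 1 - w ≠ 0 :=
  Complex.slitPlane_ne_zero (one_sub_mem_slitPlane hw)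

lemma log_two_div_one_sub (hw : ‖w‖ < 1) : Complex.log (2 / (1 - w)) = ell w := by
  rw [div_eq_mul_inv, show (2 : ℂ) = ((2 : ℝ) : ℂ) by norm_num,
    Complex.log_ofReal_mul two_pos (inv_ne_zero (one_sub_ne_zero hw)),
    Complex.log_inv _ (Complex.slitPlane_arg_ne_pi (one_sub_mem_slitPlane hw)), ell, sub_eq_add_neg]
  rfl

lemma hasDerivAt_log_one_sub (hw : ‖w‖ < 1) :
    HasDerivAt (fun u => Complex.log (1 - u)) (-(1 - w)⁻¹) w := by
  simpa [div_eq_mul_inv] using ((hasDerivAt_id w).const_sub 1).clog (one_sub_mem_slitPlane hw)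

lemma hasDerivAt_ell (hw : ‖w‖ < 1) : HasDerivAt ell (1 - w)⁻¹ w :=
  ((hasDerivAt_log_one_sub hw).const_sub _).congr_deriv (neg_neg _)

lemma hasDerivAt_ellPrim (hw : ‖w‖ < 1) : HasDerivAt ellPrim (ell w) w := by
  have h := (((hasDerivAt_id' w).mul_const (Real.log 2 : ℂ)).add
    (((hasDerivAt_id' w).const_sub 1).mul (hasDerivAt_log_one_sub hw))).add (hasDerivAt_id' w)
  refine h.congr_deriv ?_
  rw [ell, mul_neg, mul_inv_cancel₀ (one_sub_ne_zero hw)]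
  ring

lemma norm_ofReal_mul_lt (hw : ‖w‖ < 1) {t : ℝ} (ht : t ∈ Set.uIcc (0 : ℝ) 1) :
    ‖(t : ℂ) * w‖ < 1 := by
  rw [Set.uIcc_of_le zero_le_one] at ht
  rw [norm_mul, Complex.norm_real, Real.norm_of_nonneg ht.1]
  nlinarith [norm_nonneg w, ht.2]

lemma integral_mul_ell (hw : ‖w‖ < 1) :
    ∫ t in (0 : ℝ)..1, w * ell (t * w) = ellPrim w := by
  have hderiv : ∀ t ∈ Set.uIcc (0 : ℝ) 1,
      HasDerivAt (fun s : ℝ => ellPrim (s * w)) (w * ell (t * w)) t := by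
    intro t ht
    have h : HasDerivAt (ellPrim ∘ fun u : ℂ => u * w) (ell (t * w) * w) t :=
      (hasDerivAt_ellPrim (norm_ofReal_mul_lt hw ht)).comp (t : ℂ) (hasDerivAt_mul_const w)
    exact h.comp_ofReal.congr_deriv (mul_comm _ _)
  have hcont : ContinuousOn (fun t : ℝ => w * ell (t * w)) (Set.uIcc 0 1) := fun t ht =>
    (continuousAt_const.mul ((hasDerivAt_ell (norm_ofReal_mul_lt hw ht)).continuousAt.comp
      (f := fun s : ℝ => (s : ℂ) * w) (by fun_prop))).continuousWithinAt
  rw [intervalIntegral.integral_eq_sub_of_hasDerivAt hderiv hcont.intervalIntegrable]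
  simp [ellPrim]

variable (L : ℝ)

lemma hasDerivAt_Φ (hw : ‖w‖ < 1) : HasDerivAt (Φ L) (Φ₁ L w) w := by
  have h := ((((hasDerivAt_id' w).sub_const 1).const_mul (L : ℂ)⁻¹).mul
    ((((hasDerivAt_ell hw).const_add 1).pow 2).add_const 1)).sub (hasDerivAt_ellPrim hw)
  refine h.congr_deriv ?_
  have e : (w - 1) * (1 - w)⁻¹ = -1 := by
    rw [← neg_sub, neg_mul, mul_inv_cancel₀ (one_sub_ne_zero hw)]
  simp only [Pi.pow_apply, Φ₁]
  push_cast
  linear_combination (2 * (L : ℂ)⁻¹ * (1 + ell w)) * e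

lemma hasDerivAt_mul_Φ₁ (hw : ‖w‖ < 1) : HasDerivAt (fun u => u * Φ₁ L u) (Φ₂ L w) w := by
  have h := (hasDerivAt_id' w).mul
    ((((hasDerivAt_ell hw).pow 2).const_mul (L : ℂ)⁻¹).sub (hasDerivAt_ell hw))
  refine h.congr_deriv ?_
  simp only [Pi.sub_apply, Pi.pow_apply, Φ₂, Φ₁, div_eq_mul_inv]
  push_cast
  ring

end Derivatives

section Values

variable {L : ℝ} {w : ℂ}

lemma ell_ofReal {r : ℝ} (hr : r < 1) : ell r = Real.log (2 / (1 - r)) := by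
  rw [ell, Real.log_div two_ne_zero (by linarith), Complex.ofReal_sub,
    Complex.ofReal_log (x := 1 - r) (by linarith), Complex.ofReal_sub, Complex.ofReal_one]

lemma Φ₁_eq_zero_of_ell_eq (h : ell w = L) : Φ₁ L w = 0 := by
  rcases eq_or_ne (L : ℂ) 0 with hL | hL
  · simp [Φ₁, h, hL]
  · rw [Φ₁, h]
    field_simp
    ring

lemma Φ₂_eq_of_ell_eq (hL : L ≠ 0) (h : ell w = L) : Φ₂ L w = w / (1 - w) := by
  rw [Φ₂, Φ₁_eq_zero_of_ell_eq h, h, inv_mul_cancel_right₀ (Complex.ofReal_ne_zero.2 hL)]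
  ring

end Values

section Bounds

variable {L : ℝ} {w : ℂ}

lemma one_sub_norm_le_norm_one_sub (w : ℂ) : 1 - ‖w‖ ≤ ‖1 - w‖ := by
  simpa using norm_sub_norm_le (1 : ℂ) w

lemma norm_ell_le (hw : ‖w‖ < 1) : ‖ell w‖ ≤ Real.log (2 / (1 - ‖w‖)) + 2 := by
  have hpos : 0 < 1 - ‖w‖ := by linarith
  have hhi : ‖1 - w‖ ≤ 2 := (norm_sub_le _ _).trans (by rw [norm_one]; linarith)
  have hre : (ell w).re = Real.log 2 - Real.log ‖1 - w‖ := by simp [ell, Complex.log_re]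
  have him : (ell w).im = -(1 - w).arg := by simp [ell, Complex.log_im]
  have harg : |(1 - w).arg| ≤ Real.pi / 2 :=
    Complex.abs_arg_le_pi_div_two_iff.2 (re_one_sub_pos hw).le
  calc ‖ell w‖ ≤ |(ell w).re| + |(ell w).im| := Complex.norm_le_abs_re_add_abs_im _
    _ ≤ Real.log (2 / (1 - ‖w‖)) + Real.pi / 2 := by
      rw [hre, him, abs_neg, Real.log_div two_ne_zero hpos.ne',
        abs_of_nonneg (sub_nonneg.2 (Real.log_le_log (hpos.trans_le (one_sub_norm_le_norm_one_sub w)) hhi))]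
      gcongr
      exact one_sub_norm_le_norm_one_sub w
    _ ≤ Real.log (2 / (1 - ‖w‖)) + 2 := by linarith [Real.pi_le_four]

lemma mul_log_two_div_le {x : ℝ} (hx : 0 < x) : x * Real.log (2 / x) ≤ 2 :=
  calc x * Real.log (2 / x) ≤ x * (2 / x - 1) :=
        mul_le_mul_of_nonneg_left (Real.log_le_sub_one_of_pos (by positivity)) hx.le
    _ = 2 - x := by field_simp
    _ ≤ 2 := by linarith

lemma one_sub_norm_mul_norm_ell_le (hw : ‖w‖ < 1) : (1 - ‖w‖) * ‖ell w‖ ≤ 4 := by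
  have hpos : 0 < 1 - ‖w‖ := by linarith
  calc (1 - ‖w‖) * ‖ell w‖ ≤ (1 - ‖w‖) * (Real.log (2 / (1 - ‖w‖)) + 2) :=
        mul_le_mul_of_nonneg_left (norm_ell_le hw) hpos.le
    _ ≤ 2 + 2 := by nlinarith [mul_log_two_div_le hpos, norm_nonneg w]
    _ = 4 := by norm_num

lemma log_two_div_one_sub_le {s r : ℝ} (hs₀ : 0 ≤ s) (hsr : s ≤ r) (hr : r < 1) :
    Real.log (2 / (1 - s)) ≤ Real.log (2 / (1 - r ^ 2)) + Real.log 2 := by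
  have hs : 0 < 1 - s := by linarith
  have hr₂ : 0 < 1 - r ^ 2 := by nlinarith
  rw [← Real.log_mul (by positivity) two_ne_zero]
  refine Real.log_le_log (by positivity) ?_
  rw [div_mul_eq_mul_div, div_le_div_iff₀ hs hr₂]
  nlinarith

lemma one_sub_sq_mul_norm_Φ₂_le (hw : ‖w‖ < 1) (hℓ : ‖ell w‖ ≤ 4 * L) :
    (1 - ‖w‖ ^ 2) * ‖Φ₂ L w‖ ≤ 58 := by
  have hpos : 0 < 1 - ‖w‖ := by linarith
  have hL : 0 ≤ L := by linarith [norm_nonneg (ell w)]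
  have hq : ‖(L : ℂ)⁻¹ * ell w‖ ≤ 4 := by
    rw [norm_mul, norm_inv, Complex.norm_real, Real.norm_of_nonneg hL]
    exact inv_mul_le_of_le_mul₀ hL (by norm_num) (by linarith)
  have hΦ₁ : ‖Φ₁ L w‖ ≤ 5 * ‖ell w‖ := by
    have hfac : ‖(L : ℂ)⁻¹ * ell w - 1‖ ≤ 5 :=
      (norm_sub_le _ _).trans (by rw [norm_one]; linarith)
    rw [show Φ₁ L w = ell w * ((L : ℂ)⁻¹ * ell w - 1) by rw [Φ₁]; ring, norm_mul]
    nlinarith [norm_nonneg (ell w)]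
  have hquot : ‖(2 * (L : ℂ)⁻¹ * ell w - 1) / (1 - w)‖ ≤ 9 / (1 - ‖w‖) := by
    have hnum : ‖2 * (L : ℂ)⁻¹ * ell w - 1‖ ≤ 9 := by
      refine (norm_sub_le _ _).trans ?_
      rw [mul_assoc, norm_mul, norm_one, Complex.norm_two]
      linarith
    rw [norm_div]
    exact div_le_div₀ (by norm_num) hnum hpos (one_sub_norm_le_norm_one_sub w)
  have hΦ₂ : ‖Φ₂ L w‖ ≤ 5 * ‖ell w‖ + ‖w‖ * (9 / (1 - ‖w‖)) :=
    (norm_add_le _ _).trans (by rw [norm_mul]; gcongr)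
  calc (1 - ‖w‖ ^ 2) * ‖Φ₂ L w‖
      ≤ (1 - ‖w‖ ^ 2) * (5 * ‖ell w‖ + ‖w‖ * (9 / (1 - ‖w‖))) :=
        mul_le_mul_of_nonneg_left hΦ₂ (by nlinarith [norm_nonneg w])
    _ = 5 * (1 + ‖w‖) * ((1 - ‖w‖) * ‖ell w‖) + 9 * ‖w‖ * (1 + ‖w‖) := by
        field_simp
        ring
    _ ≤ 5 * 2 * 4 + 9 * 1 * 2 := by
        gcongr
        · linarith
        · exact one_sub_norm_mul_norm_ell_le hw
        · linarith
    _ = 58 := by norm_num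

lemma norm_Φ_zero_le (hL : 1 ≤ L) : ‖Φ L 0‖ ≤ 5 := by
  have h : Φ L 0 = -(((1 + Real.log 2) ^ 2 + 1) / L : ℝ) := by
    simp only [Φ, ellPrim, ell, sub_zero, Complex.log_one]
    push_cast
    ring
  rw [h, norm_neg, Complex.norm_real, Real.norm_of_nonneg (by positivity),
    div_le_iff₀ (by linarith)]
  nlinarith [Real.log_two_lt_d9, Real.log_nonneg one_le_two]

end Bounds

section Ball

variable {n : ℕ}

lemma hip_eq_inner (z a : E n) : hip n z a = inner ℂ a z := by
  simp [hip, PiLp.inner_apply, RCLike.inner_apply]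

lemma norm_hip_le (z a : E n) : ‖hip n z a‖ ≤ ‖a‖ * ‖z‖ := by
  rw [hip_eq_inner]
  exact norm_inner_le_norm a z

lemma hip_self (a : E n) : hip n a a = (‖a‖ ^ 2 : ℝ) := by
  rw [hip_eq_inner, inner_self_eq_norm_sq_to_K]
  norm_cast

lemma hasFDerivAt_hip (z a : E n) : HasFDerivAt (fun y => hip n y a) (innerSL ℂ a) z := by
  have h : (fun y => hip n y a) = innerSL ℂ a := funext fun y => hip_eq_inner y a
  rw [h]
  exact (innerSL ℂ a).hasFDerivAt

lemma eventually_norm_hip_lt {a z : E n} (hz : ‖hip n z a‖ < 1) :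
    ∀ᶠ y in 𝓝 z, ‖hip n y a‖ < 1 :=
  (hasFDerivAt_hip z a).continuousAt.norm.eventually_lt continuousAt_const hz

lemma rad_eq_fderiv_apply (f : E n → ℂ) (z : E n) : rad n f z = fderiv ℂ f z z := by
  have hz : ∑ j, z j • EuclideanSpace.single j (1 : ℂ) = z := by
    simpa using (EuclideanSpace.basisFun (Fin n) ℂ).sum_repr z
  calc rad n f z = fderiv ℂ f z (∑ j, z j • EuclideanSpace.single j (1 : ℂ)) := by simp [rad]
    _ = fderiv ℂ f z z := by rw [hz]

lemma rad_congr {f g : E n → ℂ} {z : E n} (h : f =ᶠ[𝓝 z] g) : rad n f z = rad n g z := by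
  simp only [rad, h.fderiv_eq]

lemma rad_comp_hip {g : ℂ → ℂ} {g' : ℂ} {a z : E n} (hg : HasDerivAt g g' (hip n z a)) :
    rad n (fun y => g (hip n y a)) z = g' * hip n z a := by
  have h : HasFDerivAt (fun y => g (hip n y a)) (g' • innerSL ℂ a) z :=
    hg.comp_hasFDerivAt z (hasFDerivAt_hip z a)
  rw [rad_eq_fderiv_apply, h.fderiv, hip_eq_inner]
  simp

lemma fa_eq_Φ {a z : E n} (hz : ‖hip n z a‖ < 1) :
    fa n a z = Φ (Real.log (2 / (1 - ‖a‖ ^ 2))) (hip n z a) := by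
  have hint : ∫ t in (0 : ℝ)..1, hip n z a * Complex.log (2 / (1 - t * hip n z a)) =
      ellPrim (hip n z a) := by
    rw [← integral_mul_ell hz]
    refine intervalIntegral.integral_congr fun t ht => ?_
    simp only [log_two_div_one_sub (norm_ofReal_mul_lt hz ht)]
  rw [fa, ha, hint, log_two_div_one_sub hz, Φ]

lemma rad_fa {a z : E n} (hz : ‖hip n z a‖ < 1) :
    rad n (fa n a) z = Φ₁ (Real.log (2 / (1 - ‖a‖ ^ 2))) (hip n z a) * hip n z a := by
  rw [rad_congr ((eventually_norm_hip_lt hz).mono fun y hy => fa_eq_Φ hy),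
    rad_comp_hip (hasDerivAt_Φ _ hz)]

lemma rad_rad_fa {a z : E n} (hz : ‖hip n z a‖ < 1) :
    rad n (rad n (fa n a)) z = Φ₂ (Real.log (2 / (1 - ‖a‖ ^ 2))) (hip n z a) * hip n z a := by
  have h : rad n (fa n a) =ᶠ[𝓝 z]
      fun y => (fun u => u * Φ₁ (Real.log (2 / (1 - ‖a‖ ^ 2))) u) (hip n y a) :=
    (eventually_norm_hip_lt hz).mono fun y hy => (rad_fa hy).trans (mul_comm _ _)
  rw [rad_congr h, rad_comp_hip (hasDerivAt_mul_Φ₁ _ hz)]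

lemma log_two_div_one_sub_pos {x : ℝ} (hx₀ : 0 ≤ x) (hx : x < 1) :
    0 < Real.log (2 / (1 - x)) :=
  Real.log_pos (by rw [lt_div_iff₀ (by linarith)]; linarith)

lemma one_le_log_two_div_one_sub_sq {r : ℝ} (h : √(1 - 2 / Real.exp 1) ≤ r) (hr : r < 1) :
    1 ≤ Real.log (2 / (1 - r ^ 2)) := by
  have hr₀ : 0 ≤ r := (Real.sqrt_nonneg _).trans h
  have hsq : 1 - 2 / Real.exp 1 ≤ r ^ 2 := (Real.sqrt_le_left hr₀).1 h
  have hpos : 0 < 1 - r ^ 2 := by nlinarith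
  rw [Real.le_log_iff_exp_le (by positivity), le_div_iff₀ hpos]
  calc Real.exp 1 * (1 - r ^ 2) ≤ Real.exp 1 * (2 / Real.exp 1) := by gcongr; linarith
    _ = 2 := by field_simp

variable {a : E n}

lemma norm_hip_self_lt (ha : ‖a‖ < 1) : ‖hip n a a‖ < 1 := by
  rw [hip_self, Complex.norm_real, Real.norm_of_nonneg (by positivity)]
  nlinarith [norm_nonneg a]

lemma ell_hip_self (ha : ‖a‖ < 1) : ell (hip n a a) = Real.log (2 / (1 - ‖a‖ ^ 2)) := by
  rw [hip_self, ell_ofReal (by nlinarith [norm_nonneg a])]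

lemma rad_fa_self (ha : ‖a‖ < 1) : rad n (fa n a) a = 0 := by
  rw [rad_fa (norm_hip_self_lt ha), Φ₁_eq_zero_of_ell_eq (ell_hip_self ha), zero_mul]

lemma rad_rad_fa_self (ha : ‖a‖ < 1) :
    rad n (rad n (fa n a)) a = ((‖a‖ ^ 4 / (1 - ‖a‖ ^ 2) : ℝ) : ℂ) := by
  have hL := log_two_div_one_sub_pos (sq_nonneg ‖a‖) (by nlinarith [norm_nonneg a])
  rw [rad_rad_fa (norm_hip_self_lt ha), Φ₂_eq_of_ell_eq hL.ne' (ell_hip_self ha), hip_self]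
  push_cast
  ring

lemma one_sub_sq_mul_norm_rad_rad_fa_le (hL : 1 ≤ Real.log (2 / (1 - ‖a‖ ^ 2))) (ha : ‖a‖ < 1)
    {z : E n} (hz : z ∈ uball n) : (1 - ‖z‖ ^ 2) * ‖rad n (rad n (fa n a)) z‖ ≤ 58 := by
  have hz₁ : ‖z‖ < 1 := by simpa [uball] using hz
  set w := hip n z a
  have hwa : ‖w‖ ≤ ‖a‖ := (norm_hip_le z a).trans (mul_le_of_le_one_right (norm_nonneg a) hz₁.le)
  have hwz : ‖w‖ ≤ ‖z‖ := (norm_hip_le z a).trans (mul_le_of_le_one_left (norm_nonneg z) ha.le)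
  have hw : ‖w‖ < 1 := hwz.trans_lt hz₁
  have hℓ : ‖ell w‖ ≤ 4 * Real.log (2 / (1 - ‖a‖ ^ 2)) := by
    linarith [norm_ell_le hw, log_two_div_one_sub_le (norm_nonneg w) hwa ha, Real.log_two_lt_d9]
  rw [rad_rad_fa hw, norm_mul]
  calc (1 - ‖z‖ ^ 2) * (‖Φ₂ _ w‖ * ‖w‖) = (1 - ‖z‖ ^ 2) * ‖w‖ * ‖Φ₂ _ w‖ := by ring
    _ ≤ (1 - ‖w‖ ^ 2) * ‖Φ₂ _ w‖ := by
      gcongr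
      nlinarith [mul_nonneg (norm_nonneg w) (sub_nonneg.2 (pow_le_pow_left₀ (norm_nonneg w) hwz 2)),
        mul_nonneg (sub_nonneg.2 (pow_le_one₀ (n := 2) (norm_nonneg w) hw.le)) (sub_nonneg.2 hw.le)]
    _ ≤ 58 := one_sub_sq_mul_norm_Φ₂_le hw hℓ

lemma zygNorm_fa_le (hL : 1 ≤ Real.log (2 / (1 - ‖a‖ ^ 2))) (ha : ‖a‖ < 1) :
    zygNorm n (fa n a) ≤ 63 := by
  have h₀ : fa n a 0 = Φ (Real.log (2 / (1 - ‖a‖ ^ 2))) 0 := by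
    rw [fa_eq_Φ (by simp [hip]), show hip n 0 a = 0 by simp [hip]]
  have hsup : sSup (zygSet n (fa n a)) ≤ 58 :=
    Real.sSup_le (by rintro _ ⟨z, hz, rfl⟩; exact one_sub_sq_mul_norm_rad_rad_fa_le hL ha hz)
      (by norm_num)
  rw [zygNorm, h₀]
  linarith [norm_Φ_zero_le hL]

end Ball

end ZygmundTest

open ZygmundTest

theorem fa_properties_general (n : ℕ) :
    (∀ a : E n, Real.sqrt (1 - 2 / Real.exp 1) ≤ ‖a‖ → ‖a‖ < 1 →
      rad n (fa n a) a = 0 ∧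
      rad n (rad n (fa n a)) a = ((‖a‖ ^ 4 / (1 - ‖a‖ ^ 2) : ℝ) : ℂ)) ∧
    ∃ M : ℝ, ∀ a : E n, Real.sqrt (1 - 2 / Real.exp 1) ≤ ‖a‖ → ‖a‖ < 1 →
      zygNorm n (fa n a) ≤ M :=
  ⟨fun _ _ ha => ⟨rad_fa_self ha, rad_rad_fa_self ha⟩, 63, fun _ hsq ha =>
    zygNorm_fa_le (one_le_log_two_div_one_sub_sq hsq ha) ha⟩

/-- For `√(1-2/e) ≤ |a| < 1`: `Rf_a(a) = 0`, `RRf_a(a) = |a|⁴/(1-|a|²)`, and the family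
`f_a` is bounded in the Zygmund norm. -/
theorem fa_properties (n : ℕ) (hn : 1 ≤ n) :
    (∀ a : E n, Real.sqrt (1 - 2 / Real.exp 1) ≤ ‖a‖ → ‖a‖ < 1 →
      rad n (fa n a) a = 0 ∧
      rad n (rad n (fa n a)) a = ((‖a‖ ^ 4 / (1 - ‖a‖ ^ 2) : ℝ) : ℂ)) ∧
    ∃ M : ℝ, ∀ a : E n, Real.sqrt (1 - 2 / Real.exp 1) ≤ ‖a‖ → ‖a‖ < 1 →
      zygNorm n (fa n a) ≤ M :=
  fa_properties_general n
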